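/- Let α > 0, let μ : ℝ → ℝ be continuous and nonnegative, let φ : [0,∞) → ℝ be locally integrable, and let b₁ : [0,∞) → ℝ be continuously differentiable and positive. Set π(a) = exp(−∫₀^a μ(s) ds). Define B(t) = φ(mα − t) · (∏_{i=1}^{m} b₁(t − (i−1)α)) · exp(−∫₀^{t−(m−1)α} μ(s + mα − t) ds) · exp(−(m−1)·∫₀^α μ(s) ds), where m = ⌊t/α⌋ + 1. Then B satisfies the renewal functional equation: B(t) = b₁(t)·(π(α)/π(α−t))·φ(α−t) for 0 ≤ t < α, and B(t) = b₁(t)·π(α)·B(t−α) for t ≥ α. -/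

import Mathlib

open MeasureTheory Real Set

/-!
For `t ≥ α` the index `m = ⌊t/α⌋ + 1` of the closed form drops by one when `t` is replaced by
`t - α`, and raising the index by one contributes exactly one birth factor `b₁ t` and one survival
factor `π(α)`. For `t < α` (index `1`) the translated mortality integral is `∫_{α-t}^α μ`, which
is `log (π(α - t) / π(α))`.
-/

noncomputable def renewalFormula (α : ℝ) (μ φ b₁ : ℝ → ℝ) (m : ℕ) (t : ℝ) : ℝ :=
  φ ((m : ℝ) * α - t) * (∏ i ∈ Finset.range m, b₁ (t - (i : ℝ) * α)) *
    Real.exp (-(∫ s in (0:ℝ)..(t - ((m : ℝ) - 1) * α), μ (s + (m : ℝ) * α - t))) *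
    Real.exp (-(((m : ℝ) - 1) * ∫ s in (0:ℝ)..α, μ s))

theorem renewalFormula_one (α : ℝ) (μ φ b₁ : ℝ → ℝ) (t : ℝ) :
    renewalFormula α μ φ b₁ 1 t = b₁ t * exp (-∫ s in (α - t)..α, μ s) * φ (α - t) := by
  have hshift : (∫ s in (0:ℝ)..t, μ (s + 1 * α - t)) = ∫ s in (α - t)..α, μ s := by
    simp_rw [add_sub_assoc, one_mul]
    rw [intervalIntegral.integral_comp_add_right (fun x => μ x), zero_add, add_sub_cancel]
  simp only [renewalFormula, Nat.cast_one, sub_self, zero_mul, sub_zero, Finset.prod_range_one,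
    Nat.cast_zero, neg_zero, exp_zero, mul_one, one_mul] at hshift ⊢
  rw [hshift]
  ring

theorem renewalFormula_succ (α : ℝ) (μ φ b₁ : ℝ → ℝ) (n : ℕ) (t : ℝ) :
    renewalFormula α μ φ b₁ (n + 1) t =
      b₁ t * exp (-∫ s in (0:ℝ)..α, μ s) * renewalFormula α μ φ b₁ n (t - α) := by
  have hφ : ((n + 1 : ℕ) : ℝ) * α - t = (n : ℝ) * α - (t - α) := by push_cast; ring
  have hupper : t - (((n + 1 : ℕ) : ℝ) - 1) * α = t - α - ((n : ℝ) - 1) * α := by push_cast; ring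
  have hμ : ∀ s, s + ((n + 1 : ℕ) : ℝ) * α - t = s + (n : ℝ) * α - (t - α) := fun s => by
    push_cast; ring
  have hprod : ∏ i ∈ Finset.range (n + 1), b₁ (t - (i : ℝ) * α) =
      b₁ t * ∏ i ∈ Finset.range n, b₁ (t - α - (i : ℝ) * α) := by
    rw [Finset.prod_range_succ', mul_comm]
    push_cast
    simp only [zero_mul, sub_zero, add_mul, one_mul, sub_add_eq_sub_sub_swap]
  have hexp : exp (-((((n + 1 : ℕ) : ℝ) - 1) * ∫ s in (0:ℝ)..α, μ s)) =
      exp (-∫ s in (0:ℝ)..α, μ s) * exp (-(((n : ℝ) - 1) * ∫ s in (0:ℝ)..α, μ s)) := by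
    rw [← exp_add]; push_cast; ring_nf
  simp only [renewalFormula, hφ, hupper, hμ, hprod, hexp]
  ring

theorem exp_neg_integral_div_exp_neg_integral {f : ℝ → ℝ} {a b : ℝ}
    (ha : IntervalIntegrable f volume 0 a) (hb : IntervalIntegrable f volume 0 b) :
    exp (-∫ s in (0:ℝ)..b, f s) / exp (-∫ s in (0:ℝ)..a, f s) = exp (-∫ s in a..b, f s) := by
  rw [← exp_sub, ← intervalIntegral.integral_interval_sub_left hb ha]
  ring_nf

theorem Int.floor_sub_div_self (t : ℝ) {α : ℝ} (hα : α ≠ 0) :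
    ⌊(t - α) / α⌋ = ⌊t / α⌋ - 1 := by
  rw [sub_div, div_self hα, Int.floor_sub_one]

theorem renewal_functional_equation_solution
    (α : ℝ) (hα : 0 < α)
    (μ : ℝ → ℝ) (hμc : Continuous μ)
    (φ : ℝ → ℝ)
    (b₁ : ℝ → ℝ)
    (pi : ℝ → ℝ) (hpi : ∀ a, pi a = Real.exp (-(∫ s in (0:ℝ)..a, μ s)))
    (B : ℝ → ℝ)
    (hB : ∀ t, 0 ≤ t → ∀ m : ℕ, (m : ℤ) = ⌊t / α⌋ + 1 →
      B t = φ ((m : ℝ) * α - t) * (∏ i ∈ Finset.range m, b₁ (t - (i : ℝ) * α)) *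
        Real.exp (-(∫ s in (0:ℝ)..(t - ((m : ℝ) - 1) * α), μ (s + (m : ℝ) * α - t))) *
        Real.exp (-(((m : ℝ) - 1) * ∫ s in (0:ℝ)..α, μ s))) :
    (∀ t, 0 ≤ t → t < α → B t = b₁ t * (pi α / pi (α - t)) * φ (α - t)) ∧
    (∀ t, α ≤ t → B t = b₁ t * pi α * B (t - α)) := by
  have hB' : ∀ t, 0 ≤ t → ∀ m : ℕ, (m : ℤ) = ⌊t / α⌋ + 1 → B t = renewalFormula α μ φ b₁ m t :=
    hB
  refine ⟨fun t ht htα => ?_, fun t ht => ?_⟩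
  · have hfloor : ⌊t / α⌋ = 0 :=
      Int.floor_eq_zero_iff.mpr ⟨div_nonneg ht hα.le, (div_lt_one hα).mpr htα⟩
    rw [hB' t ht 1 (by simp [hfloor]), renewalFormula_one, hpi, hpi,
      exp_neg_integral_div_exp_neg_integral (hμc.intervalIntegrable _ _)
        (hμc.intervalIntegrable _ _)]
  · obtain ⟨n, hn⟩ :=
      Int.eq_ofNat_of_zero_le (Int.floor_nonneg.mpr (div_nonneg (hα.le.trans ht) hα.le))
    rw [hB' t (hα.le.trans ht) (n + 1) (by push_cast; rw [hn]),
      hB' (t - α) (sub_nonneg.mpr ht) n (by rw [Int.floor_sub_div_self t hα.ne', hn]; ring),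
      renewalFormula_succ, hpi]
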